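/- Let 0 ≤ a < b ≤ 1 and ε ∈ (0,1). If n ≥ 2·log(1/ε)/(b-a)², then for any Boolean random variables X_1, ..., X_n satisfying Pr[∀ i ∈ S, X_i = 1] ≤ a^{|S|} for all S ⊆ {1,...,n}, we have Pr[∑ X_i ≥ n(a+b)/2] ≤ ε. -/

import Mathlib

/-! For `0/1`-valued `Xᵢ` one has `exp (t Xᵢ) = 1 + (eᵗ - 1) Xᵢ`, so `exp (t ∑ Xᵢ)` expands as
`∑_S (eᵗ - 1)^|S| 𝟙[Xᵢ = 1 for all i ∈ S]`. Taking expectations, the hypothesis bounds the moment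
generating function of `∑ Xᵢ` by `(1 - a + a eᵗ)ⁿ`, the one of a sum of `n` independent
Bernoulli(`a`) variables, although the `Xᵢ` need not be independent. Hoeffding's lemma for a
Bernoulli(`a`) variable and the Chernoff bound at `t = 4 (c - a)` then give
`Pr[∑ Xᵢ ≥ n c] ≤ exp (-2 n (c - a)²)`; here `c = (a + b) / 2`. -/

open MeasureTheory ProbabilityTheory Real

lemma one_sub_add_mul_exp_le {a : ℝ} (ha₀ : 0 ≤ a) (ha₁ : a ≤ 1) (t : ℝ) :
    1 - a + a * exp t ≤ exp (a * t + t ^ 2 / 8) := by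
  let μ : Measure Bool :=
    ENNReal.ofReal a • Measure.dirac true + ENNReal.ofReal (1 - a) • Measure.dirac false
  have : IsProbabilityMeasure μ := ⟨by simp [μ, ← ENNReal.ofReal_add, ha₀, ha₁]⟩
  have hμ (f : Bool → ℝ) : ∫ x, f x ∂μ = a * f true + (1 - a) * f false := by
    simp [integral_fintype .of_finite, μ, measureReal_def, ha₀, ha₁]
  have hoeffding := (hasSubgaussianMGF_of_mem_Icc (μ := μ) (X := fun x ↦ (x.toNat : ℝ))
    (a := 0) (b := 1) Measurable.of_discrete.aemeasurable
    (ae_of_all _ fun x ↦ by cases x <;> simp)).mgf_le t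
  have hcentred : exp (-(a * t)) * (1 - a + a * exp t) ≤ exp (t ^ 2 / 8) := by
    convert hoeffding using 1
    · simp only [mgf, hμ, Bool.toNat_true, Bool.toNat_false, Nat.cast_one, Nat.cast_zero,
        mul_one, mul_zero, add_zero]
      rw [show t * (1 - a) = t + -(a * t) by ring, show t * (0 - a) = -(a * t) by ring, exp_add]
      ring
    · norm_num; ring_nf
  calc 1 - a + a * exp t = exp (a * t) * (exp (-(a * t)) * (1 - a + a * exp t)) := by
        rw [← mul_assoc, ← exp_add, add_neg_cancel, exp_zero, one_mul]
    _ ≤ exp (a * t) * exp (t ^ 2 / 8) := by gcongr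
    _ = exp (a * t + t ^ 2 / 8) := (exp_add _ _).symm

section BooleanProducts

variable {ι Ω : Type*} {X : ι → Ω → ℕ}

lemma prod_cast_eq_indicator (hX : ∀ i ω, X i ω = 0 ∨ X i ω = 1) (S : Finset ι) (ω : Ω) :
    ∏ i ∈ S, (X i ω : ℝ) = {ω | ∀ i ∈ S, X i ω = 1}.indicator 1 ω := by
  classical
  have hXi (i : ι) : (X i ω : ℝ) = if X i ω = 1 then 1 else 0 := by
    rcases hX i ω with h | h <;> simp [h]
  simp only [hXi, Finset.prod_boole, Set.indicator_apply, Set.mem_ofPred_eq, Pi.one_apply]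

lemma exp_mul_sum_eq_sum_powerset [Fintype ι] (hX : ∀ i ω, X i ω = 0 ∨ X i ω = 1) (t : ℝ)
    (ω : Ω) :
    exp (t * ∑ i, (X i ω : ℝ)) = ∑ S ∈ Finset.univ.powerset,
      (exp t - 1) ^ S.card * {ω | ∀ i ∈ S, X i ω = 1}.indicator 1 ω := by
  have hXi (i : ι) : exp (t * X i ω) = 1 + (exp t - 1) * X i ω := by
    rcases hX i ω with h | h <;> simp [h]
  simp only [Finset.mul_sum, exp_sum, hXi, Finset.prod_one_add, Finset.prod_mul_distrib,
    Finset.prod_const, prod_cast_eq_indicator hX]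

variable [MeasurableSpace Ω] {μ : Measure Ω}

lemma measurableSet_forall_mem_eq_one (hXm : ∀ i, Measurable (X i)) (S : Finset ι) :
    MeasurableSet {ω | ∀ i ∈ S, X i ω = 1} := by
  simp only [Set.ofPred_forall]
  exact Finset.measurableSet_biInter S fun i _ ↦ hXm i (measurableSet_singleton 1)

lemma integrable_indicator_forall_mem_eq_one [IsFiniteMeasure μ] (hXm : ∀ i, Measurable (X i))
    (S : Finset ι) : Integrable ({ω | ∀ i ∈ S, X i ω = 1}.indicator (1 : Ω → ℝ)) μ :=
  (integrable_const (1 : ℝ)).indicator (measurableSet_forall_mem_eq_one hXm S)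

variable [Fintype ι]

lemma integrable_exp_mul_sum [IsFiniteMeasure μ] (hXm : ∀ i, Measurable (X i))
    (hX : ∀ i ω, X i ω = 0 ∨ X i ω = 1) (t : ℝ) :
    Integrable (fun ω ↦ exp (t * ∑ i, (X i ω : ℝ))) μ := by
  simp only [exp_mul_sum_eq_sum_powerset hX]
  exact integrable_finsetSum _ fun S _ ↦
    (integrable_indicator_forall_mem_eq_one hXm S).const_mul _

lemma mgf_sum_le_of_forall_measureReal_le_pow [IsFiniteMeasure μ] (hXm : ∀ i, Measurable (X i))
    (hX : ∀ i ω, X i ω = 0 ∨ X i ω = 1) {a : ℝ}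
    (h : ∀ S : Finset ι, μ.real {ω | ∀ i ∈ S, X i ω = 1} ≤ a ^ S.card) {t : ℝ} (ht : 0 ≤ t) :
    mgf (fun ω ↦ ∑ i, (X i ω : ℝ)) μ t ≤ (1 - a + a * exp t) ^ Fintype.card ι := by
  have hl : 0 ≤ exp t - 1 := by linarith [add_one_le_exp t]
  calc mgf (fun ω ↦ ∑ i, (X i ω : ℝ)) μ t
      = ∑ S ∈ Finset.univ.powerset,
          (exp t - 1) ^ S.card * μ.real {ω | ∀ i ∈ S, X i ω = 1} := by
        simp only [mgf, exp_mul_sum_eq_sum_powerset hX]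
        rw [integral_finsetSum _ fun S _ ↦
          (integrable_indicator_forall_mem_eq_one hXm S).const_mul _]
        simp only [integral_const_mul,
          integral_indicator_one (measurableSet_forall_mem_eq_one hXm _)]
    _ ≤ ∑ S ∈ Finset.univ.powerset,
          ((exp t - 1) * a) ^ S.card * 1 ^ (Finset.univ.card - S.card) := by
        refine Finset.sum_le_sum fun S _ ↦ ?_
        rw [one_pow, mul_one, mul_pow]
        exact mul_le_mul_of_nonneg_left (h S) (pow_nonneg hl _)
    _ = (1 - a + a * exp t) ^ Fintype.card ι := by
        rw [Finset.sum_pow_mul_eq_add_pow, Finset.card_univ]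
        ring

lemma measureReal_sum_ge_le_of_forall_measureReal_le_pow [IsFiniteMeasure μ]
    (hXm : ∀ i, Measurable (X i)) (hX : ∀ i ω, X i ω = 0 ∨ X i ω = 1) {a c : ℝ}
    (ha₀ : 0 ≤ a) (ha₁ : a ≤ 1) (hac : a ≤ c)
    (h : ∀ S : Finset ι, μ.real {ω | ∀ i ∈ S, X i ω = 1} ≤ a ^ S.card) :
    μ.real {ω | Fintype.card ι * c ≤ ∑ i, (X i ω : ℝ)} ≤
      exp (-2 * Fintype.card ι * (c - a) ^ 2) := by
  set n := Fintype.card ι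
  set t := 4 * (c - a) with ht_def
  have ht : 0 ≤ t := by linarith
  have hbase : 0 ≤ 1 - a + a * exp t := by nlinarith [one_le_exp ht]
  calc μ.real {ω | n * c ≤ ∑ i, (X i ω : ℝ)}
      ≤ exp (-t * (n * c)) * mgf (fun ω ↦ ∑ i, (X i ω : ℝ)) μ t :=
        measure_ge_le_exp_mul_mgf _ ht (integrable_exp_mul_sum hXm hX t)
    _ ≤ exp (-t * (n * c)) * (1 - a + a * exp t) ^ n := by
        gcongr; exact mgf_sum_le_of_forall_measureReal_le_pow hXm hX h ht
    _ ≤ exp (-t * (n * c)) * exp (a * t + t ^ 2 / 8) ^ n := by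
        gcongr; exact one_sub_add_mul_exp_le ha₀ ha₁ t
    _ = exp (-2 * n * (c - a) ^ 2) := by
        rw [← exp_nat_mul, ← exp_add, ht_def]; ring_nf

end BooleanProducts

theorem soundness_error_below_eps_general
    (a b ε : ℝ) (ha : 0 ≤ a) (hab : a < b) (hb : b ≤ 1)
    (hε0 : 0 < ε) (n : ℕ)
    (hn : 2 * Real.log (1 / ε) / (b - a) ^ 2 ≤ (n : ℝ))
    {Ω : Type*} [Fintype Ω] [MeasurableSpace Ω] [MeasurableSingletonClass Ω]
    (μ : Measure Ω) [IsProbabilityMeasure μ]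
    (X : Fin n → Ω → ℕ) (hX : ∀ i ω, X i ω = 0 ∨ X i ω = 1)
    (h : ∀ S : Finset (Fin n),
      (μ {ω | ∀ i ∈ S, X i ω = 1}).toReal ≤ a ^ S.card) :
    (μ {ω | (n : ℝ) * (a + b) / 2 ≤ ∑ i, (X i ω : ℝ)}).toReal ≤ ε := by
  have hchernoff := measureReal_sum_ge_le_of_forall_measureReal_le_pow (μ := μ)
    (fun i ↦ Measurable.of_discrete) hX ha (hab.le.trans hb) (by linarith : a ≤ (a + b) / 2) h
  simp only [Fintype.card_fin, ← mul_div_assoc] at hchernoff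
  have hexponent : -2 * n * ((a + b) / 2 - a) ^ 2 ≤ log ε := by
    rw [div_le_iff₀ (by nlinarith), one_div, log_inv] at hn
    linarith
  calc (μ {ω | (n : ℝ) * (a + b) / 2 ≤ ∑ i, (X i ω : ℝ)}).toReal
      ≤ exp (-2 * n * ((a + b) / 2 - a) ^ 2) := hchernoff
    _ ≤ ε := by rwa [← le_log_iff_exp_le hε0]

theorem soundness_error_below_eps
    (a b ε : ℝ) (ha : 0 ≤ a) (hab : a < b) (hb : b ≤ 1)
    (hε0 : 0 < ε) (hε1 : ε < 1) (n : ℕ)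
    (hn : 2 * Real.log (1 / ε) / (b - a) ^ 2 ≤ (n : ℝ))
    {Ω : Type*} [Fintype Ω] [MeasurableSpace Ω] [MeasurableSingletonClass Ω]
    (μ : Measure Ω) [IsProbabilityMeasure μ]
    (X : Fin n → Ω → ℕ) (hX : ∀ i ω, X i ω = 0 ∨ X i ω = 1)
    (h : ∀ S : Finset (Fin n),
      (μ {ω | ∀ i ∈ S, X i ω = 1}).toReal ≤ a ^ S.card) :
    (μ {ω | (n : ℝ) * (a + b) / 2 ≤ ∑ i, (X i ω : ℝ)}).toReal ≤ ε :=
  soundness_error_below_eps_general a b ε ha hab hb hε0 n hn μ X hX h
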